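/- arXiv:1710.08614 — 5 statements merged into one kernel-verified Lean document; each statement's English description precedes it below -/
import Mathlib

section
/- In a complete-prime algebraic complete lattice A, every element x satisfies x = inf { p | x ≤ p and p is a complete coprime }. -/
def CompletePrime {A : Type*} [CompleteLattice A] (p : A) : Prop :=
  p ≠ ⊥ ∧ ∀ U : Set A, p ≤ sSup U → ∃ x ∈ U, p ≤ x

def CompleteCoprime {A : Type*} [CompleteLattice A] (p : A) : Prop :=
  p ≠ ⊤ ∧ ∀ U : Set A, sInf U ≤ p → ∃ x ∈ U, x ≤ p

theorem stmt2 {A : Type*} [CompleteLattice A]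
    (halg : ∀ x : A, x = sSup {p | CompletePrime p ∧ p ≤ x}) (x : A) :
    x = sInf {p | CompleteCoprime p ∧ x ≤ p} := by
  apply le_antisymm
  · exact le_sInf fun b hb => hb.2
  · -- every prime below the inf is below x
    set S : Set A := {p | CompleteCoprime p ∧ x ≤ p}
    have key : ∀ p : A, CompletePrime p → p ≤ sInf S → p ≤ x := by
      intro p hp hps
      by_contra hpx
      set q : A := sSup {y | ¬ p ≤ y} with hq
      have hpq : ¬ p ≤ q := by
        intro h
        obtain ⟨y, hy, hpy⟩ := hp.2 _ h
        exact hy hpy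
      have hle : ∀ y : A, y ≤ q ↔ ¬ p ≤ y := by
        intro y
        constructor
        · intro hyq hpy
          exact hpq (hpy.trans hyq)
        · intro hpy
          exact le_sSup hpy
      have hcop : CompleteCoprime q := by
        constructor
        · intro ht
          exact hpq (ht ▸ le_top)
        · intro U hU
          by_contra h
          push_neg at h
          have : p ≤ sInf U := le_sInf fun u hu => by
            by_contra hpu
            exact h u hu ((hle u).mpr hpu)
          exact hpq (this.trans hU)
      have hxq : x ≤ q := (hle x).mpr hpx
      have : sInf S ≤ q := sInf_le ⟨hcop, hxq⟩
      exact hpq (hps.trans this)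
    calc sInf S = sSup {p | CompletePrime p ∧ p ≤ sInf S} := halg _
      _ ≤ x := sSup_le fun p hp => key p hp.1 hp.2
end

section
/- Let A be a complete-prime algebraic complete lattice and let q be a complete prime of A with q not below an element x. Then p = sup { q' | q' is a complete prime and q is not below q' } is a complete coprime, x ≤ p, and q is not below p. -/
theorem stmt3 {A : Type*} [CompleteLattice A]
    (halg : ∀ x : A, x = sSup {p | CompletePrime p ∧ p ≤ x})
    (x q : A) (hq : CompletePrime q) (hqx : ¬ q ≤ x) :
    CompleteCoprime (sSup {q' | CompletePrime q' ∧ ¬ q ≤ q'}) ∧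
    x ≤ sSup {q' | CompletePrime q' ∧ ¬ q ≤ q'} ∧
    ¬ q ≤ sSup {q' | CompletePrime q' ∧ ¬ q ≤ q'} := by
  set S : Set A := {q' | CompletePrime q' ∧ ¬ q ≤ q'} with hS
  have hqp : ¬ q ≤ sSup S := by
    intro h
    obtain ⟨r, hr, hqr⟩ := hq.2 S h
    exact hr.2 hqr
  have hxp : x ≤ sSup S := by
    conv_lhs => rw [halg x]
    apply sSup_le_sSup
    rintro r ⟨hr, hrx⟩
    exact ⟨hr, fun h => hqx (h.trans hrx)⟩
  refine ⟨⟨?_, ?_⟩, hxp, hqp⟩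
  · intro h
    exact hqp (h ▸ le_top)
  · intro U hU
    by_contra hc
    push_neg at hc
    have hqU : ∀ u ∈ U, q ≤ u := by
      intro u hu
      by_contra hqu
      apply hc u hu
      conv_lhs => rw [halg u]
      apply sSup_le
      rintro r ⟨hr, hru⟩
      by_cases hqr : q ≤ r
      · exact absurd (hqr.trans hru) hqu
      · exact le_sSup ⟨hr, hqr⟩
    exact hqp ((le_sInf hqU).trans hU)
end

section
/- Let A and B be complete lattices with A complete-prime algebraic and B complete-prime algebraic, and consider the lattice of monotone functions A → B ordered pointwise. For every d ∈ A and complete prime p of B, the function f_{d,p} defined by f_{d,p}(x) = p if d ≤ x and f_{d,p}(x) = ⊥ otherwise is a complete prime of the function lattice, and every monotone function is the supremum of the complete primes below it (so the function lattice is complete-prime algebraic). -/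
open Classical in
/-- The step function `f_{d,p}`: `x ↦ p` if `d ≤ x`, and `⊥` otherwise. -/
noncomputable def primeFun {A B : Type*} [Preorder A] [CompleteLattice B]
    (d : A) (p : B) : A →o B :=
  ⟨fun x => if d ≤ x then p else ⊥, by
    intro x y hxy
    dsimp only
    by_cases h : d ≤ x
    · rw [if_pos h, if_pos (h.trans hxy)]
    · rw [if_neg h]; exact bot_le⟩

section PrimeFun

variable {A B : Type*} [Preorder A] [CompleteLattice B]

open Classical in
lemma primeFun_apply (d : A) (p : B) (x : A) : primeFun d p x = if d ≤ x then p else ⊥ := rfl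

@[simp]
lemma primeFun_apply_self (d : A) (p : B) : primeFun d p d = p := by
  simp [primeFun_apply]

lemma primeFun_le_iff {d : A} {p : B} {g : A →o B} : primeFun d p ≤ g ↔ p ≤ g d := by
  refine ⟨fun h => by simpa using h d, fun h x => ?_⟩
  by_cases hdx : d ≤ x
  · simpa [primeFun_apply, hdx] using h.trans (g.mono hdx)
  · simp [primeFun_apply, hdx]

lemma completePrime_primeFun (d : A) {p : B} (hp : CompletePrime p) :
    CompletePrime (primeFun d p) := by
  refine ⟨fun h => hp.1 (by simpa using congrArg (fun f : A →o B => f d) h), fun U hU => ?_⟩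
  have hpd : p ≤ sSup ((fun f : A →o B => f d) '' U) := by
    rw [sSup_image, ← OrderHom.sSup_apply]
    exact primeFun_le_iff.mp hU
  obtain ⟨_, ⟨f, hf, rfl⟩, hpf⟩ := hp.2 _ hpd
  exact ⟨f, hf, primeFun_le_iff.mpr hpf⟩

end PrimeFun

theorem stmt5_general {A B : Type*} [CompleteLattice A] [CompleteLattice B]
    (hB : ∀ x : B, x = sSup {p | CompletePrime p ∧ p ≤ x}) :
    (∀ (d : A) (p : B), CompletePrime p → CompletePrime (primeFun d p)) ∧
    (∀ g : A →o B, g = sSup {h : A →o B | CompletePrime h ∧ h ≤ g}) := by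
  refine ⟨fun d p hp => completePrime_primeFun d hp, fun g => le_antisymm (fun x => ?_) ?_⟩
  · change g x ≤ _
    rw [hB (g x)]
    refine sSup_le fun p ⟨hp, hpg⟩ => ?_
    have hmem : primeFun x p ∈ {h : A →o B | CompletePrime h ∧ h ≤ g} :=
      ⟨completePrime_primeFun x hp, primeFun_le_iff.mpr hpg⟩
    simpa using le_sSup hmem x
  · exact sSup_le fun h hh => hh.2

theorem stmt5 {A B : Type*} [CompleteLattice A] [CompleteLattice B]
    (hA : ∀ x : A, x = sSup {p | CompletePrime p ∧ p ≤ x})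
    (hB : ∀ x : B, x = sSup {p | CompletePrime p ∧ p ≤ x}) :
    (∀ (d : A) (p : B), CompletePrime p → CompletePrime (primeFun d p)) ∧
    (∀ g : A →o B, g = sSup {h : A →o B | CompletePrime h ∧ h ≤ g}) :=
  stmt5_general hB
end

section
/- Let L₁, L₂ be complete lattices and let f : L₁ × L₂ → L₁ and g : L₁ × L₂ → L₂ be monotone. Then the first component of the least fixpoint of the monotone map (x, y) ↦ (f(x,y), g(x,y)) on the product lattice L₁ × L₂ equals the least fixpoint of the map x ↦ f(x, lfp(λy. g(x,y))) (Bekić property). -/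
namespace OrderHom

variable {α β : Type*} [CompleteLattice α] [CompleteLattice β]

def lfpParam (g : α × β →o β) : α →o β :=
  lfp.comp (curry g)

theorem lfpParam_le_of_map_le (g : α × β →o β) {p : α × β} (h : g p ≤ p.2) :
    lfpParam g p.1 ≤ p.2 :=
  lfp_le _ h

/-- Bekić's principle. -/
theorem lfp_prod (f : α × β →o α) (g : α × β →o β) :
    (f.prod g).lfp =
      ((f.comp (id.prod (lfpParam g))).lfp, lfpParam g (f.comp (id.prod (lfpParam g))).lfp) := by
  set h := f.comp (id.prod (lfpParam g))
  set p := (f.prod g).lfp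
  have hp : f.prod g p = p := map_lfp _
  have hk : lfpParam g p.1 ≤ p.2 := lfpParam_le_of_map_le g (congrArg Prod.snd hp).le
  have ha : h.lfp ≤ p.1 := lfp_le _ <| calc
    f (p.1, lfpParam g p.1) ≤ f p := f.mono (Prod.mk_le_mk.2 ⟨le_rfl, hk⟩)
    _ = p.1 := congrArg Prod.fst hp
  have hfix : f.prod g (h.lfp, lfpParam g h.lfp) = (h.lfp, lfpParam g h.lfp) :=
    Prod.ext (map_lfp h) (map_lfp (curry g h.lfp))
  exact le_antisymm (lfp_le_fixed _ hfix)
    (Prod.mk_le_mk.2 ⟨ha, ((lfpParam g).mono ha).trans hk⟩)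

end OrderHom

theorem stmt9 {L₁ L₂ : Type*} [CompleteLattice L₁] [CompleteLattice L₂]
    (f : L₁ × L₂ → L₁) (g : L₁ × L₂ → L₂) (hf : Monotone f) (hg : Monotone g) :
    (sInf {p : L₁ × L₂ | (f p, g p) ≤ p}).1 =
      sInf {x : L₁ | f (x, sInf {y : L₂ | g (x, y) ≤ y}) ≤ x} :=
  -- `OrderHom.lfp f` unfolds to `sInf {a | f a ≤ a}`, so both sides are `lfp` by definition.
  congrArg Prod.fst (OrderHom.lfp_prod ⟨f, hf⟩ ⟨g, hg⟩)
end

section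
/- Consider a parity game whose node set is partitioned into Proponent nodes V_P and Opponent nodes V_O, which is bipartite (every edge goes between V_P and V_O) and in which every Opponent node has priority 0. If a Proponent strategy S on a set of initial nodes V₀ admits a parity progress measure, then S is a winning strategy on V₀; in particular every infinite play conforming to S and starting in V₀ satisfies the parity condition. -/
/-- A parity game: nodes `V`, Proponent nodes (`isP`), edges `E`, priorities `prio`. -/
structure ParityGame where
  V : Type
  isP : V → Prop
  E : V → V → Prop
  prio : V → ℕ

namespace ParityGame

variable (G : ParityGame)

/-- A finite play: consecutive nodes are connected by edges. -/
def IsPlay (l : List G.V) : Prop := l.Chain' G.E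

/-- The history `π 0, …, π i` of an infinite play. -/
def history (π : ℕ → G.V) (i : ℕ) : List G.V := (List.range (i + 1)).map π

/-- A finite play conforms with the (partial) strategy `S`. -/
def Conforms (S : List G.V → Option G.V) (l : List G.V) : Prop :=
  ∀ (i : ℕ) (h : i + 1 < l.length),
    G.isP (l[i]'(Nat.lt_of_succ_lt h)) → S (l.take (i + 1)) = some (l[i + 1]'h)

/-- The play starts from a node in `V₀`. -/
def StartsIn (V₀ : Set G.V) (l : List G.V) : Prop := ∃ v₀ ∈ V₀, l.head? = some v₀

/-- `S` is a Proponent strategy on `V₀`: it respects edges and is defined on every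
conforming play starting in `V₀` and ending in a Proponent node. -/
def IsStrategy (S : List G.V → Option G.V) (V₀ : Set G.V) : Prop :=
  (∀ l v w, S l = some w → l.getLast? = some v → G.E v w) ∧
  (∀ l, G.IsPlay l → G.Conforms S l → G.StartsIn V₀ l →
    (∃ v, l.getLast? = some v ∧ G.isP v) → (S l).isSome)

/-- An infinite play. -/
def IsInfPlay (π : ℕ → G.V) : Prop := ∀ i, G.E (π i) (π (i + 1))

/-- An infinite play conforms with the strategy `S`. -/
def ConformsInf (S : List G.V → Option G.V) (π : ℕ → G.V) : Prop :=
  ∀ i, G.isP (π i) → S (G.history π i) = some (π (i + 1))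

/-- The parity condition: the maximum priority occurring infinitely often is even. -/
def ParityCond (π : ℕ → G.V) : Prop :=
  ∃ m, Even m ∧ {i | G.prio (π i) = m}.Infinite ∧
    ∀ m', {i | G.prio (π i) = m'}.Infinite → m' ≤ m

/-- `S` is winning on `V₀`: every maximal finite conforming play starting in `V₀`
ends in an Opponent node, and every infinite conforming play starting in `V₀`
satisfies the parity condition. -/
def Winning (S : List G.V → Option G.V) (V₀ : Set G.V) : Prop :=
  (∀ l v, G.IsPlay l → G.Conforms S l → G.StartsIn V₀ l →
    l.getLast? = some v → (∀ w, ¬ G.E v w) → ¬ G.isP v) ∧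
  (∀ π, G.IsInfPlay π → G.ConformsInf S π → π 0 ∈ V₀ → G.ParityCond π)

end ParityGame

/-- `lexGE k a b`: the first `k` components of `a` are lexicographically ≥ those of `b`. -/
def lexGE : ℕ → (ℕ → Ordinal) → (ℕ → Ordinal) → Prop
  | 0, _, _ => True
  | k + 1, a, b => b 0 < a 0 ∨ (a 0 = b 0 ∧ lexGE k (fun i => a (i + 1)) (fun i => b (i + 1)))

/-- `lexGT k a b`: the first `k` components of `a` are lexicographically > those of `b`. -/
def lexGT : ℕ → (ℕ → Ordinal) → (ℕ → Ordinal) → Prop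
  | 0, _, _ => False
  | k + 1, a, b => b 0 < a 0 ∨ (a 0 = b 0 ∧ lexGT k (fun i => a (i + 1)) (fun i => b (i + 1)))

namespace ParityGame

variable (G : ParityGame)

/-- A parity progress measure of the strategy `S` on `V₀`, with values tuples of
ordinals `< γ` (of length `n`, the maximal priority): for every conforming finite play
`ṽ · v_O · v_P · v_O'` starting from `V₀`, the measure is defined on `v_O` and `v_O'`,
decreases weakly w.r.t. `≥_{Ω(v_P)}`, and strictly if `Ω(v_P)` is odd. -/
def IsProgressMeasure (S : List G.V → Option G.V) (V₀ : Set G.V) (n : ℕ) (γ : Ordinal)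
    (ϖ : G.V → Option (ℕ → Ordinal)) : Prop :=
  (∀ v t, ϖ v = some t → ∀ i, t i < γ) ∧
  (∀ (l : List G.V) (vO vP vO' : G.V),
    G.IsPlay (l ++ [vO, vP, vO']) → G.Conforms S (l ++ [vO, vP, vO']) →
    G.StartsIn V₀ (l ++ [vO, vP, vO']) →
    ¬ G.isP vO → G.isP vP → ¬ G.isP vO' →
    ∃ t t', ϖ vO = some t ∧ ϖ vO' = some t' ∧
      lexGE (n + 1 - G.prio vP) t t' ∧
      (Odd (G.prio vP) → lexGT (n + 1 - G.prio vP) t t'))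

end ParityGame

/-!
Along an infinite conforming play the Opponent nodes alternate with Proponent nodes, so the
measure read off at successive Opponent nodes is a sequence of ordinal tuples. Let `m` be the
largest priority seen infinitely often. From some point on every priority is at most `m`, so
the sequence is weakly decreasing in its first `n + 1 - m` coordinates; if `m` were odd (hence
a Proponent priority) it would also decrease strictly infinitely often there, which the
well-foundedness of the lexicographic order on ordinal tuples forbids. Finite maximal plays
cannot end at a Proponent node, since the strategy always proposes an edge there.
-/

universe u

section Lex

theorem lexGE_refl : ∀ (k : ℕ) (a : ℕ → Ordinal), lexGE k a a
  | 0, _ => trivial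
  | k + 1, _ => Or.inr ⟨rfl, lexGE_refl k _⟩

theorem lexGE_trans : ∀ {k : ℕ} {a b c : ℕ → Ordinal}, lexGE k a b → lexGE k b c → lexGE k a c
  | 0, _, _, _, _, _ => trivial
  | _ + 1, _, _, _, .inl h₁, .inl h₂ => .inl (h₂.trans h₁)
  | _ + 1, _, _, _, .inl h₁, .inr ⟨e₂, _⟩ => .inl (e₂ ▸ h₁)
  | _ + 1, _, _, _, .inr ⟨e₁, _⟩, .inl h₂ => .inl (e₁ ▸ h₂)
  | _ + 1, _, _, _, .inr ⟨e₁, h₁⟩, .inr ⟨e₂, h₂⟩ => .inr ⟨e₁.trans e₂, lexGE_trans h₁ h₂⟩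

theorem lexGE.trans_lexGT :
    ∀ {k : ℕ} {a b c : ℕ → Ordinal}, lexGE k a b → lexGT k b c → lexGT k a c
  | 0, _, _, _, _, h => h.elim
  | _ + 1, _, _, _, .inl h₁, .inl h₂ => .inl (h₂.trans h₁)
  | _ + 1, _, _, _, .inl h₁, .inr ⟨e₂, _⟩ => .inl (e₂ ▸ h₁)
  | _ + 1, _, _, _, .inr ⟨e₁, _⟩, .inl h₂ => .inl (e₁ ▸ h₂)
  | _ + 1, _, _, _, .inr ⟨e₁, h₁⟩, .inr ⟨e₂, h₂⟩ => .inr ⟨e₁.trans e₂, h₁.trans_lexGT h₂⟩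

theorem lexGE.of_le : ∀ {k j : ℕ} {a b : ℕ → Ordinal}, j ≤ k → lexGE k a b → lexGE j a b
  | _, 0, _, _, _, _ => trivial
  | 0, _ + 1, _, _, hj, _ => absurd hj (Nat.not_succ_le_zero _)
  | _ + 1, _ + 1, _, _, _, .inl h => .inl h
  | _ + 1, _ + 1, _, _, hj, .inr ⟨e, h⟩ => .inr ⟨e, h.of_le (Nat.le_of_succ_le_succ hj)⟩

theorem wellFounded_lexGT_swap : ∀ k : ℕ, WellFounded fun a b : ℕ → Ordinal => lexGT k b a
  | 0 => ⟨fun a => ⟨a, fun _ h => h.elim⟩⟩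
  | k + 1 => by
    refine Subrelation.wf (r := InvImage (Prod.Lex (· < ·) fun a b => lexGT k b a)
      fun a : ℕ → Ordinal => (a 0, fun i => a (i + 1))) ?_
      (InvImage.wf _ (Ordinal.lt_wf.prod_lex (wellFounded_lexGT_swap k)))
    intro a b h
    simpa only [InvImage, Prod.lex_def, lexGT, eq_comm] using h

theorem false_of_lexGE_of_frequently_lexGT {k : ℕ} {s : ℕ → ℕ → Ordinal}
    (hge : ∀ i, lexGE k (s i) (s (i + 1))) (hgt : ∀ b, ∃ i ≥ b, lexGT k (s i) (s (i + 1))) :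
    False := by
  have hchain : ∀ i j, i ≤ j → lexGE k (s i) (s j) := fun i j hij => by
    induction j, hij using Nat.le_induction with
    | base => exact lexGE_refl k _
    | succ j _ ih => exact lexGE_trans ih (hge j)
  suffices ∀ a i, lexGE k a (s i) → False from this (s 0) 0 (lexGE_refl k _)
  intro a
  induction a using (wellFounded_lexGT_swap k).induction with
  | _ a ih =>
    intro i hi
    obtain ⟨j, hij, hj⟩ := hgt i
    exact ih _ ((lexGE_trans hi (hchain i j hij)).trans_lexGT hj) (j + 1) (lexGE_refl k _)

end Lex

section Fibers

variable {f : ℕ → ℕ} {n : ℕ}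

theorem exists_max_infinite_fiber (hf : ∀ i, f i ≤ n) :
    ∃ m, {i | f i = m}.Infinite ∧ ∀ m', {i | f i = m'}.Infinite → m' ≤ m := by
  have hne : {m | {i | f i = m}.Infinite}.Nonempty := by
    by_contra! h
    exact Set.infinite_univ (((Set.finite_Iic n).preimage' fun m _ =>
      Set.not_infinite.1 (Set.eq_empty_iff_forall_notMem.1 h m)).subset fun i _ => hf i)
  have hbdd : BddAbove {m | {i | f i = m}.Infinite} := ⟨n, fun m hm => by
    obtain ⟨i, hi⟩ := hm.nonempty
    exact hi ▸ hf i⟩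
  exact ⟨_, Nat.sSup_mem hne hbdd, fun m' hm' => le_csSup hbdd hm'⟩

theorem exists_forall_ge_le_of_infinite_fiber_le {m : ℕ} (hf : ∀ i, f i ≤ n)
    (hmax : ∀ m', {i | f i = m'}.Infinite → m' ≤ m) : ∃ N, ∀ i ≥ N, f i ≤ m := by
  have hfin : (f ⁻¹' Set.Ioc m n).Finite := (Set.finite_Ioc m n).preimage' fun m' hm' =>
    Set.not_infinite.1 fun h => (hm'.1.trans_le (hmax m' h)).false
  obtain ⟨N, hN⟩ := hfin.bddAbove
  exact ⟨N + 1, fun i hi => not_lt.1 fun hlt => by have := hN ⟨hlt, hf i⟩; omega⟩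

end Fibers

namespace ParityGame

variable {G : ParityGame}

theorem IsStrategy.not_isP_of_forall_not_E {S : List G.V → Option G.V} {V₀ : Set G.V}
    (hS : G.IsStrategy S V₀) {l : List G.V} {v : G.V} (hp : G.IsPlay l) (hc : G.Conforms S l)
    (hs : G.StartsIn V₀ l) (hlast : l.getLast? = some v) (hdead : ∀ w, ¬ G.E v w) :
    ¬ G.isP v := fun hv => by
  obtain ⟨w, hw⟩ := Option.isSome_iff_exists.1 (hS.2 l hp hc hs ⟨v, hlast, hv⟩)
  exact hdead w (hS.1 l v w hw hlast)

section History

variable {π : ℕ → G.V}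

theorem getElem_history (i j : ℕ) (hj : j < (G.history π i).length) :
    (G.history π i)[j] = π j := by
  simp [history]

theorem take_history {i j : ℕ} (h : j ≤ i) : (G.history π i).take (j + 1) = G.history π j := by
  simp [history, ← List.map_take, List.take_range, Nat.min_eq_left (Nat.succ_le_succ h)]

theorem history_add_two (i : ℕ) :
    G.history π (i + 2) = (List.range i).map π ++ [π i, π (i + 1), π (i + 2)] := by
  simp [history, List.range_succ]

theorem isPlay_history (hπ : G.IsInfPlay π) (i : ℕ) : G.IsPlay (G.history π i) := by
  rw [IsPlay, history, List.Chain', List.isChain_map, List.isChain_range_succ]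
  exact fun m _ => hπ m

theorem conforms_history {S : List G.V → Option G.V} (hc : G.ConformsInf S π) (i : ℕ) :
    G.Conforms S (G.history π i) := by
  intro j hj hP
  have hji : j ≤ i := by
    simp only [history, List.length_map, List.length_range] at hj
    omega
  rw [getElem_history] at hP
  rw [getElem_history, take_history hji]
  exact hc j hP

theorem startsIn_history {V₀ : Set G.V} (h0 : π 0 ∈ V₀) (i : ℕ) :
    G.StartsIn V₀ (G.history π i) :=
  ⟨π 0, h0, by simp [history, List.range_succ_eq_map]⟩

end History

theorem exists_isP_iff_odd (hbip : ∀ v w, G.E v w → (G.isP v ↔ ¬ G.isP w)) {π : ℕ → G.V}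
    (hπ : G.IsInfPlay π) : ∃ i₀, ∀ j, G.isP (π (i₀ + j)) ↔ Odd j := by
  have hflip : ∀ i, G.isP (π (i + 1)) ↔ ¬ G.isP (π i) := fun i => by
    have := hbip _ _ (hπ i)
    tauto
  obtain ⟨i₀, h₀⟩ : ∃ i₀, ¬ G.isP (π i₀) := by
    by_cases h : G.isP (π 0)
    exacts [⟨1, fun h₁ => (hflip 0).1 h₁ h⟩, ⟨0, h⟩]
  refine ⟨i₀, fun j => ?_⟩
  induction j with
  | zero => simpa using h₀
  | succ j ih => rw [← add_assoc, hflip, ih, Nat.odd_add_one]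

variable {S : List G.V → Option G.V} {V₀ : Set G.V} {n : ℕ} {γ : Ordinal.{u}}
  {ϖ : G.V → Option (ℕ → Ordinal.{u})} {π : ℕ → G.V}

theorem IsProgressMeasure.exists_of_isInfPlay (hmeas : G.IsProgressMeasure S V₀ n γ ϖ)
    (hπ : G.IsInfPlay π) (hc : G.ConformsInf S π) (h0 : π 0 ∈ V₀) {i : ℕ}
    (h₁ : ¬ G.isP (π i)) (h₂ : G.isP (π (i + 1))) (h₃ : ¬ G.isP (π (i + 2))) :
    ∃ t t', ϖ (π i) = some t ∧ ϖ (π (i + 2)) = some t' ∧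
      lexGE (n + 1 - G.prio (π (i + 1))) t t' ∧
      (Odd (G.prio (π (i + 1))) → lexGT (n + 1 - G.prio (π (i + 1))) t t') := by
  have hp := isPlay_history hπ (i + 2)
  have hc := conforms_history hc (i + 2)
  have hs := startsIn_history h0 (i + 2)
  rw [history_add_two] at hp hc hs
  exact hmeas.2 _ _ _ _ hp hc hs h₁ h₂ h₃

/-- `t k` is the measure at the Opponent node `π (i₀ + 2 * k)`. -/
theorem IsProgressMeasure.exists_descent (hbip : ∀ v w, G.E v w → (G.isP v ↔ ¬ G.isP w))
    (hmeas : G.IsProgressMeasure S V₀ n γ ϖ) (hπ : G.IsInfPlay π) (hc : G.ConformsInf S π)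
    (h0 : π 0 ∈ V₀) :
    ∃ (i₀ : ℕ) (t : ℕ → ℕ → Ordinal.{u}), (∀ j, G.isP (π (i₀ + j)) ↔ Odd j) ∧
      ∀ k, lexGE (n + 1 - G.prio (π (i₀ + 2 * k + 1))) (t k) (t (k + 1)) ∧
        (Odd (G.prio (π (i₀ + 2 * k + 1))) →
          lexGT (n + 1 - G.prio (π (i₀ + 2 * k + 1))) (t k) (t (k + 1))) := by
  obtain ⟨i₀, hO⟩ := exists_isP_iff_odd hbip hπ
  refine ⟨i₀, fun k => (ϖ (π (i₀ + 2 * k))).getD 0, hO, fun k => ?_⟩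
  obtain ⟨t, t', ht, ht', hdesc⟩ := hmeas.exists_of_isInfPlay hπ hc h0 (i := i₀ + 2 * k)
    ((hO (2 * k)).not.2 (Nat.not_odd_iff_even.2 (even_two_mul k)))
    ((hO (2 * k + 1)).2 (odd_two_mul_add_one k))
    ((hO (2 * k + 2)).not.2 (Nat.not_odd_iff_even.2 ⟨k + 1, by ring⟩))
  simpa [Nat.mul_succ, ← add_assoc, ht, ht'] using hdesc

theorem parityCond_of_isProgressMeasure (hbip : ∀ v w, G.E v w → (G.isP v ↔ ¬ G.isP w))
    (hopp : ∀ v, ¬ G.isP v → G.prio v = 0) (hbound : ∀ v, G.prio v ≤ n)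
    (hmeas : G.IsProgressMeasure S V₀ n γ ϖ) (hπ : G.IsInfPlay π) (hc : G.ConformsInf S π)
    (h0 : π 0 ∈ V₀) : G.ParityCond π := by
  obtain ⟨i₀, t, hO, hdesc⟩ := hmeas.exists_descent hbip hπ hc h0
  obtain ⟨m, hm, hmax⟩ := exists_max_infinite_fiber fun i => hbound (π i)
  refine ⟨m, ?_, hm, hmax⟩
  by_contra hodd
  rw [Nat.not_even_iff_odd] at hodd
  obtain ⟨N, hN⟩ := exists_forall_ge_le_of_infinite_fiber_le (fun i => hbound (π i)) hmax
  have hfreq : ∀ b, ∃ k ≥ b, G.prio (π (i₀ + 2 * k + 1)) = m := fun b => by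
    obtain ⟨i, hi, hbi⟩ := hm.exists_gt (i₀ + 2 * b)
    have hP : G.isP (π i) := by
      by_contra h
      exact Nat.not_odd_zero (hopp _ h ▸ hi ▸ hodd)
    obtain ⟨j, rfl⟩ := Nat.exists_eq_add_of_le (show i₀ ≤ i by omega)
    obtain ⟨k, rfl⟩ := (hO j).1 hP
    exact ⟨k, by omega, hi⟩
  refine false_of_lexGE_of_frequently_lexGT (k := n + 1 - m) (s := fun k => t (N + k))
    (fun k => (hdesc (N + k)).1.of_le ?_) fun b => ?_
  · have := hN (i₀ + 2 * (N + k) + 1) (by omega)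
    omega
  · obtain ⟨k, hk, hkm⟩ := hfreq (N + b)
    refine ⟨k - N, by omega, ?_⟩
    have := (hdesc k).2 (hkm ▸ hodd)
    rw [hkm] at this
    simpa only [show N + (k - N) = k by omega, show N + (k - N + 1) = k + 1 by omega] using this

end ParityGame

theorem stmt12 (G : ParityGame)
    (hbip : ∀ v w, G.E v w → (G.isP v ↔ ¬ G.isP w))
    (hopp : ∀ v, ¬ G.isP v → G.prio v = 0)
    (n : ℕ) (hbound : ∀ v, G.prio v ≤ n)
    (V₀ : Set G.V) (S : List G.V → Option G.V)
    (hS : G.IsStrategy S V₀)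
    (γ : Ordinal) (ϖ : G.V → Option (ℕ → Ordinal))
    (hmeas : G.IsProgressMeasure S V₀ n γ ϖ) :
    G.Winning S V₀ ∧
    (∀ π, G.IsInfPlay π → G.ConformsInf S π → π 0 ∈ V₀ → G.ParityCond π) := by
  have hparity : ∀ π, G.IsInfPlay π → G.ConformsInf S π → π 0 ∈ V₀ → G.ParityCond π :=
    fun _ hπ hc h0 => ParityGame.parityCond_of_isProgressMeasure hbip hopp hbound hmeas hπ hc h0
  exact ⟨⟨fun _ _ hp hc hs hlast hdead => hS.not_isP_of_forall_not_E hp hc hs hlast hdead,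
    hparity⟩, hparity⟩
end
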